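/- The order ≺ on the free monoid Φ* is a reduction order: it is a total well-founded order (a well-order), the empty word is its minimum, and for all words a, b, s_1, s_2 ∈ Φ*, if s_1 ≺ s_2 then a·s_1·b ≺ a·s_2·b. -/

import Mathlib

noncomputable section

/-- The alphabet `Φ = {t, a_0, …, a_3, Q_0, …, Q_6, P_0, …, P_3, R}`. -/
inductive Phi
  | t
  | a (k : Fin 4)
  | Q (i : Fin 7)
  | P (j : Fin 4)
  | R
deriving DecidableEq, Fintype

/-- `deg_t w`: the number of occurrences of the letter `t` in the word `w`. -/
def degT (w : List Phi) : ℕ := w.count Phi.t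

/-- The height of a word `w = X_0 t X_1 t ⋯ t X_n` (the `X_i` free from `t`):
`h(w) = Σ_{i=0}^n 2^i · deg(X_i)`. -/
def height (w : List Phi) : ℕ :=
  ((w.splitOn Phi.t).zipIdx.map (fun p => 2 ^ p.2 * p.1.length)).sum

/-- The degree-lexicographic order on words associated to a fixed total order on the letters. -/
def deglex [LinearOrder Phi] (w₁ w₂ : List Phi) : Prop :=
  w₁.length < w₂.length ∨ (w₁.length = w₂.length ∧ List.Lex (· < ·) w₁ w₂)

/-- The order `≺` of Proposition 2: first compare the number of occurrences of `t`, then the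
height, then use deglex. -/
def prec [LinearOrder Phi] (w₁ w₂ : List Phi) : Prop :=
  degT w₁ < degT w₂ ∨ (degT w₁ = degT w₂ ∧
    (height w₁ < height w₂ ∨ (height w₁ = height w₂ ∧ deglex w₁ w₂)))

/-!
Writing `key w = (deg_t w, h w, w)`, the order `≺` is the pullback along the injective map `key`
of the lexicographic product of `<` on `ℕ`, `<` on `ℕ` and deglex; deglex is the shortlex order
over a finite alphabet, hence a well-order, and lexicographic products of well-orders are
well-orders. For compatibility: `deg_t` is additive and `h(uv) = h(u) + 2^{deg_t u} h(v)`, so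
multiplying on the left changes the height by an increasing affine map, and multiplying on the
right, once `deg_t` agrees, adds the same amount to both heights; shortlex is compatible with
concatenation on both sides.
-/

open List Function

lemma degT_append (a b : List Phi) : degT (a ++ b) = degT a + degT b :=
  count_append ..

lemma degT_t_cons (l : List Phi) : degT (Phi.t :: l) = degT l + 1 :=
  count_cons_self ..

lemma degT_cons_of_ne {x : Phi} (hx : x ≠ Phi.t) (l : List Phi) : degT (x :: l) = degT l :=
  count_cons_of_ne hx

def binaryWeight {α : Type*} (cs : List (List α)) : ℕ :=
  cs.foldr (fun X s => X.length + 2 * s) 0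

lemma sum_zipIdx_two_pow_mul_length {α : Type*} (cs : List (List α)) (n : ℕ) :
    ((cs.zipIdx n).map fun p => 2 ^ p.2 * p.1.length).sum = 2 ^ n * binaryWeight cs := by
  induction cs generalizing n with
  | nil => simp [binaryWeight]
  | cons c cs ih => simp [binaryWeight, zipIdx_cons, ih]; ring

lemma height_eq_binaryWeight (w : List Phi) : height w = binaryWeight (w.splitOn Phi.t) := by
  simpa [height] using sum_zipIdx_two_pow_mul_length (w.splitOn Phi.t) 0

lemma height_nil : height [] = 0 := rfl

lemma height_t_cons (l : List Phi) : height (Phi.t :: l) = 2 * height l := by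
  simp [height_eq_binaryWeight, splitOn_cons_eq_if_modifyHead, binaryWeight]

lemma height_cons_of_ne {x : Phi} (hx : x ≠ Phi.t) (l : List Phi) :
    height (x :: l) = height l + 1 := by
  obtain ⟨X, Xs, hl⟩ := exists_cons_of_ne_nil (l.splitOn_ne_nil Phi.t)
  simp [height_eq_binaryWeight, splitOn_cons_eq_if_modifyHead, hx, hl, binaryWeight]
  ring

lemma height_append (a b : List Phi) : height (a ++ b) = height a + 2 ^ degT a * height b := by
  induction a with
  | nil => simp [height_nil, degT]
  | cons x a ih =>
    by_cases hx : x = Phi.t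
    · subst hx
      rw [cons_append, height_t_cons, height_t_cons, ih, degT_t_cons, pow_succ]
      ring
    · rw [cons_append, height_cons_of_ne hx, height_cons_of_ne hx, ih, degT_cons_of_ne hx]
      ring

namespace List

variable {α : Type*}

lemma Lex.append_right_of_length_eq {r : α → α → Prop} :
    ∀ {s₁ s₂ : List α}, Lex r s₁ s₂ → s₁.length = s₂.length → ∀ t, Lex r (s₁ ++ t) (s₂ ++ t)
  | _, _, .nil, h, _ => by simp at h
  | _, _, .cons hl, h, t => .cons (hl.append_right_of_length_eq (by simpa using h) t)
  | _, _, .rel hab, _, _ => .rel hab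

lemma Shortlex.append_same_right {r : α → α → Prop} {s₁ s₂ : List α} (t : List α)
    (h : Shortlex r s₁ s₂) : Shortlex r (s₁ ++ t) (s₂ ++ t) := by
  rcases shortlex_def.mp h with hlen | ⟨hlen, hlex⟩
  · exact .of_length_lt (by simpa using hlen)
  · exact .of_lex (by simp [hlen]) (hlex.append_right_of_length_eq hlen t)

instance isWellOrder_shortlex [LinearOrder α] [WellFoundedLT α] :
    IsWellOrder (List α) (Shortlex (· < ·)) := by
  have : IsStrictTotalOrder (ℕ × List α) (Prod.Lex (· < ·) (Lex (· < ·))) :=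
    inferInstanceAs (IsStrictTotalOrder (ℕ ×ₗ List α) (· < ·))
  have hinj : Injective fun l : List α => (l.length, l) := fun _ _ h => congrArg Prod.snd h
  exact { hinj.isStrictTotalOrder_onFun _ with wf := Shortlex.wf wellFounded_lt }

end List

section

variable [LinearOrder Phi]

lemma deglex_eq_shortlex : deglex = Shortlex (· < ·) := by
  ext w₁ w₂
  exact shortlex_def.symm

lemma prec_eq_onFun :
    prec = (Prod.Lex (· < ·) (Prod.Lex (· < ·) deglex) on fun w => (degT w, height w, w)) := by
  ext w₁ w₂
  simp only [onFun, Prod.lex_def, prec]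

instance isWellOrder_prec : IsWellOrder (List Phi) prec := by
  have : IsWellOrder (List Phi) deglex := deglex_eq_shortlex ▸ isWellOrder_shortlex
  rw [prec_eq_onFun]
  exact (RelEmbedding.preimage ⟨_, fun _ _ h => congrArg (·.2.2) h⟩ _).isWellOrder

lemma nil_prec {w : List Phi} (hw : w ≠ []) : prec [] w := by
  have hdeglex : deglex [] w := by
    rw [deglex_eq_shortlex]
    exact (shortlex_nil_or_eq_nil w).resolve_right hw
  rcases (degT w).eq_zero_or_pos with hd | hd
  · rcases (height w).eq_zero_or_pos with hh | hh
    · exact Or.inr ⟨hd.symm, Or.inr ⟨hh.symm, hdeglex⟩⟩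
    · exact Or.inr ⟨hd.symm, Or.inl hh⟩
  · exact Or.inl hd

lemma prec_append_left (u : List Phi) {s₁ s₂ : List Phi} (h : prec s₁ s₂) :
    prec (u ++ s₁) (u ++ s₂) := by
  simp only [prec, degT_append, height_append, deglex_eq_shortlex] at h ⊢
  rcases h with hd | ⟨hd, hh | ⟨hh, hl⟩⟩
  · exact Or.inl (by omega)
  · exact Or.inr ⟨by rw [hd], Or.inl (by gcongr)⟩
  · exact Or.inr ⟨by rw [hd], Or.inr ⟨by rw [hh], hl.append_left u⟩⟩

lemma prec_append_right (v : List Phi) {s₁ s₂ : List Phi} (h : prec s₁ s₂) :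
    prec (s₁ ++ v) (s₂ ++ v) := by
  simp only [prec, degT_append, height_append, deglex_eq_shortlex] at h ⊢
  rcases h with hd | ⟨hd, hh | ⟨hh, hl⟩⟩
  · exact Or.inl (by omega)
  · exact Or.inr ⟨by rw [hd], Or.inl (by rw [hd]; omega)⟩
  · exact Or.inr ⟨by rw [hd], Or.inr ⟨by rw [hd, hh], hl.append_same_right v⟩⟩

end

/-- The order `≺` on the free monoid `Φ*` is a reduction order: it is a total
well-founded order (a well-order), the empty word is its minimum, and it is compatible with
multiplication on both sides. -/
theorem prec_is_reduction_order [LinearOrder Phi] :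
    (∀ w₁ w₂ : List Phi, prec w₁ w₂ ∨ w₁ = w₂ ∨ prec w₂ w₁) ∧
    (∀ w₁ w₂ w₃ : List Phi, prec w₁ w₂ → prec w₂ w₃ → prec w₁ w₃) ∧
    (∀ w : List Phi, ¬ prec w w) ∧
    WellFounded (prec : List Phi → List Phi → Prop) ∧
    (∀ w : List Phi, w ≠ [] → prec [] w) ∧
    (∀ u v s₁ s₂ : List Phi, prec s₁ s₂ → prec (u ++ s₁ ++ v) (u ++ s₂ ++ v)) :=
  ⟨trichotomous_of prec, fun _ _ _ => trans_of prec, irrefl_of prec, IsWellFounded.wf,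
    fun _ => nil_prec, fun _ v _ _ h => prec_append_right v (prec_append_left _ h)⟩
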